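/- Let v_1,...,v_s ∈ R^d, ε_1,...,ε_s iid N(0, s/M − 1) with sample mean ε̄, and define λ' = (1/s)Σ_{n=1}^s (1 + ε_n − ε̄)·v_n. Then E[λ'] = (1/s)Σ_n v_n and Cov(λ') = (1/M − 1/s)·Σ_v, where Σ_v = (1/s)Σ_n (v_n − μ)(v_n − μ)^T and μ = (1/s)Σ_n v_n. -/

import Mathlib

open MeasureTheory ProbabilityTheory Finset Matrix

/-!
Subtracting the noise mean `ε̄` recentres every `v_n` at `μ`:
`λ' = μ + s⁻¹ ∑ₙ εₙ (vₙ - μ)`. The `εₙ` are independent and centred with variance `s/M - 1`,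
so only diagonal terms survive in the covariance, which is
`s⁻² (s/M - 1) ∑ₙ (vₙ - μ)(vₙ - μ)ᵀ = (1/M - 1/s) Σ_v`.
-/

namespace ProbabilityTheory

variable {Ω ι : Type*} [MeasurableSpace Ω] [Fintype ι] {P : Measure Ω} [IsProbabilityMeasure P]
  {ε : ι → Ω → ℝ}

lemma iIndepFun.covariance_fun_sum_mul_fun_sum_mul (hindep : iIndepFun ε P)
    (hL2 : ∀ n, MemLp (ε n) 2 P) (a b : ι → ℝ) :
    cov[fun ω ↦ ∑ n, a n * ε n ω, fun ω ↦ ∑ n, b n * ε n ω; P]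
      = ∑ n, a n * b n * Var[ε n; P] := by
  classical
  have hcross (n m : ι) : cov[ε n, ε m; P] = if n = m then Var[ε n; P] else 0 := by
    split_ifs with h
    · subst h; exact covariance_self (hL2 n).aemeasurable
    · exact (hindep.indepFun h).covariance_eq_zero (hL2 n) (hL2 m)
  rw [covariance_fun_sum_fun_sum (fun n ↦ (hL2 n).const_mul (a n))
    (fun n ↦ (hL2 n).const_mul (b n))]
  simp only [covariance_const_mul_left, covariance_const_mul_right, hcross, mul_ite, mul_zero,
    sum_ite_eq, mem_univ, if_true]
  exact sum_congr rfl fun n _ ↦ by ring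

lemma iIndepFun.integral_sum_mul_mul_sum_mul (hindep : iIndepFun ε P)
    (hL2 : ∀ n, MemLp (ε n) 2 P) (hmean : ∀ n, P[ε n] = 0) (a b : ι → ℝ) :
    ∫ ω, (∑ n, a n * ε n ω) * (∑ n, b n * ε n ω) ∂P = ∑ n, a n * b n * Var[ε n; P] := by
  have hcentered (c : ι → ℝ) : ∫ ω, ∑ n, c n * ε n ω ∂P = 0 := by
    rw [integral_finsetSum _ fun n _ ↦ ((hL2 n).integrable one_le_two).const_mul (c n)]
    simp [integral_const_mul, hmean]
  rw [← hindep.covariance_fun_sum_mul_fun_sum_mul hL2, covariance, hcentered, hcentered]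
  simp

end ProbabilityTheory

lemma smul_sum_one_add_sub_mean_smul_eq {ι K E : Type*} [Fintype ι] [CommRing K]
    [AddCommGroup E] [Module K E] (e : ι → K) (w : ι → E) (c : K) :
    c • ∑ n, (1 + e n - c * ∑ m, e m) • w n
      = c • ∑ n, w n + c • ∑ n, e n • (w n - c • ∑ m, w m) := by
  simp only [add_smul, sub_smul, one_smul, smul_sub, sum_add_distrib, sum_sub_distrib,
    ← sum_smul, mul_smul, ← smul_sum]
  rw [smul_comm (∑ m, e m) c, smul_add]
  abel

theorem sviPlus_gradient_moments_general {Ω : Type*} [MeasurableSpace Ω] (s d : ℕ)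
    (P : Measure Ω) [IsProbabilityMeasure P]
    (M : ℝ) (hM : 0 < M) (hMs : M < (s : ℝ))
    (ε : Fin s → Ω → ℝ) (hmeas : ∀ n, Measurable (ε n))
    (hlaw : ∀ n, Measure.map (ε n) P = gaussianReal 0 (Real.toNNReal ((s : ℝ) / M - 1)))
    (hindep : iIndepFun ε P)
    (εbar : Ω → ℝ) (hεbar : εbar = fun ω => (s : ℝ)⁻¹ * ∑ n : Fin s, ε n ω)
    (v : Fin s → Fin d → ℝ)
    (μ : Fin d → ℝ) (hμ : μ = (s : ℝ)⁻¹ • ∑ n : Fin s, v n)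
    (Sv : Matrix (Fin d) (Fin d) ℝ)
    (hSv : Sv = (s : ℝ)⁻¹ • ∑ n : Fin s, vecMulVec (v n - μ) (v n - μ))
    (lam : Ω → Fin d → ℝ)
    (hlam : lam = fun ω => (s : ℝ)⁻¹ • ∑ n : Fin s, (1 + ε n ω - εbar ω) • v n) :
    (∀ i, ∫ ω, lam ω i ∂P = μ i) ∧
    (∀ i j, ∫ ω, (lam ω i - μ i) * (lam ω j - μ j) ∂P = (M⁻¹ - (s : ℝ)⁻¹) * Sv i j) := by
  have hs : (s : ℝ) ≠ 0 := (hM.trans hMs).ne'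
  have hvar_nonneg : 0 ≤ (s : ℝ) / M - 1 := by
    rw [sub_nonneg, le_div_iff₀ hM]; linarith
  have hgauss n : HasLaw (ε n) (gaussianReal 0 (Real.toNNReal ((s : ℝ) / M - 1))) P :=
    ⟨(hmeas n).aemeasurable, hlaw n⟩
  have hL2 n : MemLp (ε n) 2 P := (hgauss n).hasGaussianLaw.memLp_two
  have hmean n : P[ε n] = 0 := by rw [(hgauss n).integral_eq, integral_id_gaussianReal]
  have hvar n : Var[ε n; P] = (s : ℝ) / M - 1 := by
    rw [(hgauss n).variance_eq, variance_id_gaussianReal, Real.coe_toNNReal _ hvar_nonneg]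
  have hlam_sub ω i : lam ω i - μ i = ∑ n, (s : ℝ)⁻¹ * (v n i - μ i) * ε n ω := by
    rw [hlam, hεbar]
    dsimp only
    rw [smul_sum_one_add_sub_mean_smul_eq, ← hμ]
    simp only [Pi.add_apply, Pi.sub_apply, Pi.smul_apply, Finset.sum_apply, smul_eq_mul,
      add_sub_cancel_left, mul_sum]
    exact sum_congr rfl fun n _ ↦ by ring
  have hlam_eq ω i : lam ω i = μ i + ∑ n, (s : ℝ)⁻¹ * (v n i - μ i) * ε n ω := by
    rw [← hlam_sub]; ring
  refine ⟨fun i ↦ ?_, fun i j ↦ ?_⟩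
  · simp_rw [hlam_eq]
    rw [integral_add (integrable_const _)
      (integrable_finsetSum _ fun n _ ↦ ((hL2 n).integrable one_le_two).const_mul _),
      integral_finsetSum _ fun n _ ↦ ((hL2 n).integrable one_le_two).const_mul _]
    simp [integral_const_mul, hmean]
  · simp_rw [hlam_sub]
    rw [hindep.integral_sum_mul_mul_sum_mul hL2 hmean, hSv]
    simp only [hvar, Matrix.smul_apply, Matrix.sum_apply, vecMulVec_apply, Pi.sub_apply,
      smul_eq_mul, mul_sum]
    refine sum_congr rfl fun n _ ↦ ?_
    field_simp

/-- Mean and covariance of the SVI+ noise-augmented statistic: with fixed vectors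
`v_1,…,v_s ∈ ℝ^d`, iid noise `ε_n ∼ N(0, s/M − 1)` with sample mean `ε̄`, and
`λ' = (1/s)∑_n (1 + ε_n − ε̄)·v_n`, one has `E[λ'] = (1/s)∑_n v_n = μ` and
`Cov(λ') = (1/M − 1/s)·Σ_v`, where `Σ_v = (1/s)∑_n (v_n − μ)(v_n − μ)ᵀ`. -/
theorem sviPlus_gradient_moments {Ω : Type*} [MeasurableSpace Ω] (s d : ℕ) (hs : 0 < s)
    (P : Measure Ω) [IsProbabilityMeasure P]
    (M : ℝ) (hM : 0 < M) (hMs : M < (s : ℝ))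
    (ε : Fin s → Ω → ℝ) (hmeas : ∀ n, Measurable (ε n))
    (hlaw : ∀ n, Measure.map (ε n) P = gaussianReal 0 (Real.toNNReal ((s : ℝ) / M - 1)))
    (hindep : iIndepFun ε P)
    (εbar : Ω → ℝ) (hεbar : εbar = fun ω => (s : ℝ)⁻¹ * ∑ n : Fin s, ε n ω)
    (v : Fin s → Fin d → ℝ)
    (μ : Fin d → ℝ) (hμ : μ = (s : ℝ)⁻¹ • ∑ n : Fin s, v n)
    (Sv : Matrix (Fin d) (Fin d) ℝ)
    (hSv : Sv = (s : ℝ)⁻¹ • ∑ n : Fin s, vecMulVec (v n - μ) (v n - μ))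
    (lam : Ω → Fin d → ℝ)
    (hlam : lam = fun ω => (s : ℝ)⁻¹ • ∑ n : Fin s, (1 + ε n ω - εbar ω) • v n) :
    (∀ i, ∫ ω, lam ω i ∂P = μ i) ∧
    (∀ i j, ∫ ω, (lam ω i - μ i) * (lam ω j - μ j) ∂P = (M⁻¹ - (s : ℝ)⁻¹) * Sv i j) :=
  sviPlus_gradient_moments_general s d P M hM hMs ε hmeas hlaw hindep εbar hεbar v μ hμ Sv hSv lam
    hlam
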